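/- arXiv:1006.4928 — 2 statements merged into one kernel-verified Lean document; each statement's English description precedes it below -/
import Mathlib

section
/- If h < 1/2, then the background h is robust for the splitting model on Z^d (d ≥ 1): for every initial mass n ≥ 0 and every valid splitting order, the configuration η_n^h stabilizes, i.e. every site splits only finitely many times. -/
/-!
Let `A` be the set of sites that split by time `T` and `ℓ x` the step of the last split of `x`
(`0` if none). From step `ℓ x` on, `x` keeps the `1/(2d)` it receives from every neighbour that
splits at step `ℓ x` or later, and a site that never split also keeps its initial mass. Every edge
at `A` is thus credited to at least one of its endpoints (the one that split last, or the one that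
never split), so conservation of mass on `A` and its neighbours gives
`|A| / 2 ≤ ∑_{x ∈ A} η₀ x ≤ n + max h 0 · |A|`. For `h < 1/2` this bounds the number of sites
that ever split.

Conversely, a neighbour of a site that splits infinitely often receives `1/(2d)` at each of those
splits; if it stopped splitting it would become unstable, and a valid order would make it split
again. Walking along a coordinate axis, infinitely many sites would split.
-/

open scoped BigOperators

/-- The nearest neighbor of `x ∈ ℤ^d` obtained by shifting coordinate `i` by `ε`. -/
def nbr {d : ℕ} (x : Fin d → ℤ) (i : Fin d) (ε : ℤ) : Fin d → ℤ :=
  Function.update x i (x i + ε)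

/-- Nearest-neighbor adjacency in `ℤ^d`. -/
def Adj {d : ℕ} (x y : Fin d → ℤ) : Prop :=
  (∑ i, |x i - y i|) = 1

/-- The splitting model on `ℤ^d` with initial mass `n` at the origin and background
mass `h` at every other site, together with a splitting order: `S (t+1)` is the set
of sites that split at time `t+1` (a subset of the sites unstable at time `t`,
i.e. those of mass `≥ 1`), and the mass `η` evolves by Zhang's toppling rule:
a splitting site loses all its mass, distributing a fraction `1/(2d)` of it to
each of its `2d` nearest neighbors. -/
structure SplittingModel (d : ℕ) (n h : ℝ) where
  η : ℕ → (Fin d → ℤ) → ℝ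
  S : ℕ → Set (Fin d → ℤ)
  init_origin : η 0 0 = n
  init_other : ∀ x : Fin d → ℤ, x ≠ 0 → η 0 x = h
  S_zero : S 0 = ∅
  S_subset : ∀ t, S (t + 1) ⊆ {x | 1 ≤ η t x}
  evolve : ∀ t x, η (t + 1) x =
      (S (t + 1))ᶜ.indicator (η t) x
        + (1 / (2 * (d : ℝ))) * ∑ i : Fin d,
            ((S (t + 1)).indicator (η t) (nbr x i 1)
              + (S (t + 1)).indicator (η t) (nbr x i (-1)))

namespace SplittingModel

variable {d : ℕ} {n h : ℝ}

/-- A valid splitting order: some unstable site splits whenever there is an unstable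
site, and every site that is unstable at some time eventually splits. -/
def Valid (M : SplittingModel d n h) : Prop :=
  (∀ t, {x | 1 ≤ M.η t x}.Nonempty → (M.S (t + 1)).Nonempty) ∧
    (∀ t x, 1 ≤ M.η t x → ∃ t₀, 1 ≤ t₀ ∧ x ∈ M.S (t + t₀))

/-- The parallel splitting order (the splitting automaton): at every time step,
every unstable site splits. -/
def Parallel (M : SplittingModel d n h) : Prop :=
  ∀ t, M.S (t + 1) = {x | 1 ≤ M.η t x}

/-- The set of sites that split at least once up to (and including) time `t`. -/
def Tt (M : SplittingModel d n h) (t : ℕ) : Set (Fin d → ℤ) :=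
  ⋃ t' ∈ Set.Icc 1 t, M.S t'

/-- The set of sites that split at least once. -/
def T (M : SplittingModel d n h) : Set (Fin d → ℤ) :=
  ⋃ t, M.S t

/-- The model stabilizes: every site splits only finitely many times. -/
def Stabilizes (M : SplittingModel d n h) : Prop :=
  ∀ x, {t | x ∈ M.S t}.Finite

/-- The total mass `u x` emitted from the site `x` during stabilization. -/
noncomputable def emit (M : SplittingModel d n h) (x : Fin d → ℤ) : ℝ :=
  ∑' t : ℕ, (M.S (t + 1)).indicator (M.η t) x

end SplittingModel

open scoped Classical
open Finset

lemma Set.Infinite.exists_le_card_filter_Ico {P : ℕ → Prop} (hP : {u | P u}.Infinite)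
    (b k : ℕ) :
    ∃ T, b ≤ T ∧ k ≤ #{u ∈ Finset.Ico b T | P u} := by
  obtain ⟨s, hs, rfl⟩ := (hP.sdiff (Set.finite_Iio b)).exists_subset_card_eq k
  refine ⟨max b (s.sup id + 1), le_max_left _ _, Finset.card_le_card fun u hu => ?_⟩
  obtain ⟨hPu, hbu⟩ := hs hu
  have : u ≤ s.sup id := Finset.le_sup (f := id) hu
  simp only [Set.mem_Iio, not_lt] at hbu
  simp only [Finset.mem_filter, Finset.mem_Ico]
  exact ⟨⟨hbu, by omega⟩, hPu⟩

namespace SplittingModel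

variable {d : ℕ} {n h : ℝ}

def dir (p : Fin d × Bool) : Fin d → ℤ :=
  Pi.single p.1 (if p.2 then 1 else -1)

lemma dir_flip (i : Fin d) (b : Bool) : dir (i, !b) = -dir (i, b) := by
  cases b <;> simp [dir, Pi.single_neg]

lemma nbr_eq_add (x : Fin d → ℤ) (i : Fin d) (ε : ℤ) : nbr x i ε = x + Pi.single i ε := by
  ext j
  rcases eq_or_ne j i with rfl | hj
  · simp [nbr]
  · simp [nbr, Function.update_of_ne hj, Pi.single_eq_of_ne hj]

lemma sum_nbr_eq_sum_dir (f : (Fin d → ℤ) → ℝ) (x : Fin d → ℤ) :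
    ∑ i, (f (nbr x i 1) + f (nbr x i (-1))) = ∑ p : Fin d × Bool, f (x + dir p) := by
  simp [Fintype.sum_prod_type, dir, nbr_eq_add]

lemma add_dir_flip (x : Fin d → ℤ) (p : Fin d × Bool) : x + dir p + dir (p.1, !p.2) = x := by
  rw [dir_flip]; abel

lemma card_mul_le_sum_card_filter {A F : Finset (Fin d → ℤ)} (ℓ : (Fin d → ℤ) → ℕ)
    (hAF : A ⊆ F) (hF : ∀ x ∈ A, ∀ p, x + dir p ∈ F) (hℓ : ∀ x ∉ A, ℓ x = 0) :
    d * #A ≤ ∑ x ∈ F, #{p | x + dir p ∈ A ∧ ℓ x ≤ ℓ (x + dir p)} := by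
  let ψ : (Fin d → ℤ) × (Fin d × Bool) → (Fin d → ℤ) × (Fin d × Bool) :=
    fun a => (a.1 + dir a.2, (a.2.1, !a.2.2))
  have hψψ : ∀ a, ψ (ψ a) = a := fun a => by simp [ψ, add_dir_flip]
  set credited : (Fin d → ℤ) → Finset (Fin d × Bool) :=
    fun x => {p | x + dir p ∈ A ∧ ℓ x ≤ ℓ (x + dir p)}
  let G := F.biUnion fun x => (credited x).image (x, ·)
  have hG : ∀ x p, x ∈ F → x + dir p ∈ A → ℓ x ≤ ℓ (x + dir p) → (x, p) ∈ G :=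
    fun x p hx hA hℓx => by simp [G, credited, hx, hA, hℓx]
  -- an edge at `A` is credited to its endpoint that split last, or to the one that never split
  have hcover : A ×ˢ univ ⊆ G ∪ G.image ψ := by
    rintro ⟨x, p⟩ hxp
    have hx : x ∈ A := (mem_product.mp hxp).1
    by_cases hy : x + dir p ∈ A ∧ ℓ x ≤ ℓ (x + dir p)
    · exact mem_union_left _ (hG x p (hAF hx) hy.1 hy.2)
    · refine mem_union_right _ (mem_image.mpr ⟨ψ (x, p), ?_, hψψ _⟩)
      refine hG _ _ (hF x hx p) (by simpa [ψ, add_dir_flip] using hx) ?_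
      simp only [add_dir_flip]
      by_cases hyA : x + dir p ∈ A
      · exact (not_le.mp fun h => hy ⟨hyA, h⟩).le
      · simp [hℓ _ hyA]
  have hcard : #(A ×ˢ (univ : Finset (Fin d × Bool))) = 2 * (d * #A) := by
    simp [card_product]; ring
  have : 2 * (d * #A) ≤ 2 * ∑ x ∈ F, #(credited x) := by
    calc 2 * (d * #A) = #(A ×ˢ (univ : Finset (Fin d × Bool))) := hcard.symm
      _ ≤ #G + #(G.image ψ) := (card_le_card hcover).trans (card_union_le _ _)
      _ ≤ 2 * #G := by linarith [card_image_le (s := G) (f := ψ)]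
      _ ≤ 2 * ∑ x ∈ F, #(credited x) := by
        gcongr
        exact card_biUnion_le.trans (sum_le_sum fun x _ => card_image_le)
  exact Nat.le_of_mul_le_mul_left this two_pos

variable (M : SplittingModel d n h)

/-- `2d` times the mass that `x` receives at time `t + 1`. -/
noncomputable def inflow (t : ℕ) (x : Fin d → ℤ) : ℝ :=
  ∑ p, (M.S (t + 1)).indicator (M.η t) (x + dir p)

lemma eta_succ (t : ℕ) (x : Fin d → ℤ) :
    M.η (t + 1) x = (if x ∈ M.S (t + 1) then 0 else M.η t x) + 1 / (2 * d) * M.inflow t x := by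
  rw [M.evolve, sum_nbr_eq_sum_dir, Set.indicator_apply, inflow]
  split_ifs <;> simp_all

lemma indicator_nonneg (t : ℕ) (z : Fin d → ℤ) : 0 ≤ (M.S (t + 1)).indicator (M.η t) z :=
  Set.indicator_nonneg (fun _ hz => zero_le_one.trans (M.S_subset t hz)) z

lemma inflow_nonneg (t : ℕ) (x : Fin d → ℤ) : 0 ≤ M.inflow t x :=
  sum_nonneg fun _ _ => M.indicator_nonneg t _

lemma card_split_neighbors_le_inflow (t : ℕ) (x : Fin d → ℤ) :
    (#{p | x + dir p ∈ M.S (t + 1)} : ℝ) ≤ M.inflow t x := by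
  rw [card_filter, Nat.cast_sum, inflow]
  refine sum_le_sum fun _ _ => ?_
  split_ifs with hp
  · simpa [Set.indicator_of_mem hp] using M.S_subset t hp
  · simpa using M.indicator_nonneg t _

lemma indicator_le_inflow (t : ℕ) (x : Fin d → ℤ) (p : Fin d × Bool) :
    (M.S (t + 1)).indicator (M.η t) (x + dir p) ≤ M.inflow t x :=
  single_le_sum (fun q _ => M.indicator_nonneg t (x + dir q)) (mem_univ p)

lemma eta_eq_add_sum_inflow {s T : ℕ} (hsT : s ≤ T) {x : Fin d → ℤ}
    (hx : ∀ u ∈ Ico s T, x ∉ M.S (u + 1)) :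
    M.η T x = M.η s x + 1 / (2 * d) * ∑ u ∈ Ico s T, M.inflow u x := by
  induction T, hsT using Nat.le_induction with
  | base => simp
  | succ T hsT ih =>
    rw [M.eta_succ, if_neg (hx T (by simp [hsT])), sum_Ico_succ_top hsT,
      ih fun u hu => hx u (Ico_subset_Ico_right T.le_succ hu)]
    ring

lemma eta_eq_sum_inflow_of_last_split {s T : ℕ} (hsT : s < T) {x : Fin d → ℤ}
    (hxs : x ∈ M.S (s + 1)) (hx : ∀ u ∈ Ico (s + 1) T, x ∉ M.S (u + 1)) :
    M.η T x = 1 / (2 * d) * ∑ u ∈ Ico s T, M.inflow u x := by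
  rw [M.eta_eq_add_sum_inflow hsT hx, M.eta_succ, if_pos hxs, sum_eq_sum_Ico_succ_bot hsT]
  ring

lemma card_arrivals_le_sum_inflow (U : Finset ℕ) (x : Fin d → ℤ) :
    (#{p | ∃ u ∈ U, x + dir p ∈ M.S (u + 1)} : ℝ) ≤ ∑ u ∈ U, M.inflow u x := by
  calc (#{p | ∃ u ∈ U, x + dir p ∈ M.S (u + 1)} : ℝ)
      ≤ (#(U.biUnion fun u => {p | x + dir p ∈ M.S (u + 1)}) : ℝ) := by
        gcongr
        intro p hp
        simpa using hp
    _ ≤ ∑ u ∈ U, (#{p | x + dir p ∈ M.S (u + 1)} : ℝ) := by exact_mod_cast card_biUnion_le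
    _ ≤ ∑ u ∈ U, M.inflow u x := sum_le_sum fun u _ => M.card_split_neighbors_le_inflow u x

lemma finite_ne_background (hh : h < 1) (t : ℕ) : {x | M.η t x ≠ h}.Finite := by
  induction t with
  | zero =>
    refine (Set.finite_singleton 0).subset fun x hx => ?_
    by_contra hx0
    exact hx (M.init_other x hx0)
  | succ t ih =>
    refine (ih.union (Set.finite_iUnion fun p => ih.image (· + dir p))).subset fun x hx => ?_
    by_contra hout
    simp only [Set.mem_union, Set.mem_iUnion, Set.mem_image, Set.mem_ofPred_eq, not_or,
      not_exists, not_and, not_not] at hout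
    have hS : ∀ z ∈ M.S (t + 1), M.η t z ≠ h := fun z hz =>
      ((M.S_subset t hz).trans_lt' hh).ne'
    have hxS : x ∉ M.S (t + 1) := fun hmem => hS x hmem hout.1
    have hinflow : M.inflow t x = 0 := by
      refine sum_eq_zero fun p _ => Set.indicator_of_notMem (fun hmem => ?_) _
      exact hout.2 (p.1, !p.2) _ (hS _ hmem) (add_dir_flip x p)
    exact hx (by rw [M.eta_succ, if_neg hxS, hinflow, mul_zero, add_zero, hout.1])

lemma finite_S (hh : h < 1) (t : ℕ) : (M.S t).Finite := by
  cases t with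
  | zero => simp [M.S_zero]
  | succ t => exact (M.finite_ne_background hh t).subset fun z hz =>
      ((M.S_subset t hz).trans_lt' hh).ne'

lemma sum_indicator_add_dir {t : ℕ} {F : Finset (Fin d → ℤ)}
    (hSF : ∀ z ∈ M.S (t + 1), z ∈ F) (hF : ∀ z ∈ M.S (t + 1), ∀ p, z + dir p ∈ F)
    (p : Fin d × Bool) :
    ∑ x ∈ F, (M.S (t + 1)).indicator (M.η t) (x + dir p)
      = ∑ x ∈ F, (M.S (t + 1)).indicator (M.η t) x := by
  set f := (M.S (t + 1)).indicator (M.η t)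
  have hsupp : ∀ x, f x ≠ 0 → x ∈ M.S (t + 1) := fun x hx => Set.mem_of_indicator_ne_zero hx
  have hsupp_shift : Function.support (fun x => f (x + dir p)) ⊆ F := fun x hx => by
    simpa [add_dir_flip] using hF _ (hsupp _ hx) (p.1, !p.2)
  calc ∑ x ∈ F, f (x + dir p) = ∑ᶠ x, f (x + dir p) :=
        (finsum_eq_sum_of_support_subset _ hsupp_shift).symm
    _ = ∑ᶠ x, f x := finsum_comp_equiv (Equiv.addRight (dir p))
    _ = ∑ x ∈ F, f x := finsum_eq_sum_of_support_subset f fun x hx => hSF x (hsupp x hx)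

lemma sum_eta_succ (hd : 1 ≤ d) {t : ℕ} {F : Finset (Fin d → ℤ)}
    (hSF : ∀ z ∈ M.S (t + 1), z ∈ F) (hF : ∀ z ∈ M.S (t + 1), ∀ p, z + dir p ∈ F) :
    ∑ x ∈ F, M.η (t + 1) x = ∑ x ∈ F, M.η t x := by
  have hshift := M.sum_indicator_add_dir hSF hF
  set f := (M.S (t + 1)).indicator (M.η t)
  have hstay : ∀ x, (if x ∈ M.S (t + 1) then 0 else M.η t x) = M.η t x - f x := fun x => by
    by_cases hx : x ∈ M.S (t + 1) <;> simp [f, hx]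
  have hd0 : (2 * d : ℝ) ≠ 0 := by positivity
  calc ∑ x ∈ F, M.η (t + 1) x
      = ∑ x ∈ F, M.η t x - ∑ x ∈ F, f x
          + 1 / (2 * d) * ∑ p : Fin d × Bool, ∑ x ∈ F, f (x + dir p) := by
        simp only [M.eta_succ, hstay, inflow, sum_add_distrib, sum_sub_distrib, ← mul_sum]
        rw [sum_comm]
    _ = ∑ x ∈ F, M.η t x := by
        simp only [hshift, sum_const, card_univ, Fintype.card_prod,
          Fintype.card_fin, Fintype.card_bool, nsmul_eq_mul]
        push_cast
        field_simp
        ring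

lemma sum_eta_eq_sum_eta_zero (hd : 1 ≤ d) {T : ℕ} {F : Finset (Fin d → ℤ)}
    (hSF : ∀ u < T, ∀ z ∈ M.S (u + 1), z ∈ F)
    (hF : ∀ u < T, ∀ z ∈ M.S (u + 1), ∀ p, z + dir p ∈ F) :
    ∑ x ∈ F, M.η T x = ∑ x ∈ F, M.η 0 x := by
  induction T with
  | zero => rfl
  | succ T ih =>
    rw [M.sum_eta_succ hd (hSF T T.lt_succ_self) (hF T T.lt_succ_self)]
    exact ih (fun u hu => hSF u (hu.trans T.lt_succ_self))
      fun u hu => hF u (hu.trans T.lt_succ_self)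

lemma mem_Tt {T : ℕ} {x : Fin d → ℤ} : x ∈ M.Tt T ↔ ∃ u < T, x ∈ M.S (u + 1) := by
  simp only [Tt, Set.mem_iUnion, Set.mem_Icc, exists_prop]
  constructor
  · rintro ⟨t, ⟨ht1, htT⟩, hx⟩
    exact ⟨t - 1, by omega, by rwa [Nat.sub_add_cancel ht1]⟩
  · rintro ⟨u, hu, hx⟩
    exact ⟨u + 1, ⟨by omega, by omega⟩, hx⟩

lemma finite_Tt (hh : h < 1) (T : ℕ) : (M.Tt T).Finite :=
  (Set.finite_Icc 1 T).biUnion fun t _ => M.finite_S hh t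

/-- The last step `u < T` at which `x` splits (at time `u + 1`), or `0` if it does not split
before time `T`. -/
noncomputable def lastSplit (T : ℕ) (x : Fin d → ℤ) : ℕ :=
  {u ∈ range T | x ∈ M.S (u + 1)}.sup id

lemma le_lastSplit {T u : ℕ} {x : Fin d → ℤ} (hu : u < T) (hx : x ∈ M.S (u + 1)) :
    u ≤ M.lastSplit T x :=
  le_sup (f := id) (mem_filter.mpr ⟨mem_range.mpr hu, hx⟩)

lemma lastSplit_of_notMem_Tt {T : ℕ} {x : Fin d → ℤ} (hx : x ∉ M.Tt T) :
    M.lastSplit T x = 0 := by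
  rw [lastSplit, filter_false_of_mem fun u hu hxu =>
    hx (M.mem_Tt.mpr ⟨u, mem_range.mp hu, hxu⟩)]
  rfl

lemma lastSplit_spec {T : ℕ} {x : Fin d → ℤ} (hx : x ∈ M.Tt T) :
    M.lastSplit T x < T ∧ x ∈ M.S (M.lastSplit T x + 1) := by
  obtain ⟨u, hu, hxu⟩ := M.mem_Tt.mp hx
  obtain ⟨v, hv, hsup⟩ :=
    exists_mem_eq_sup {u ∈ range T | x ∈ M.S (u + 1)} ⟨u, by simp [hu, hxu]⟩ id
  rw [lastSplit, hsup]
  simpa using hv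

lemma eta_eq_add_sum_inflow_lastSplit (T : ℕ) (x : Fin d → ℤ) :
    M.η T x = (if x ∈ M.Tt T then 0 else M.η 0 x)
      + 1 / (2 * d) * ∑ u ∈ Ico (M.lastSplit T x) T, M.inflow u x := by
  split_ifs with hx
  · obtain ⟨hlt, hxs⟩ := M.lastSplit_spec hx
    rw [zero_add]
    refine M.eta_eq_sum_inflow_of_last_split hlt hxs fun u hu hxu => ?_
    have := M.le_lastSplit (mem_Ico.mp hu).2 hxu
    have := (mem_Ico.mp hu).1
    omega
  · rw [M.lastSplit_of_notMem_Tt hx]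
    exact M.eta_eq_add_sum_inflow T.zero_le fun u hu hxu =>
      hx (M.mem_Tt.mpr ⟨u, (mem_Ico.mp hu).2, hxu⟩)

lemma card_later_neighbors_le_eta (T : ℕ) (x : Fin d → ℤ) :
    (if x ∈ M.Tt T then 0 else M.η 0 x)
      + 1 / (2 * d) * #{p | x + dir p ∈ M.Tt T ∧ M.lastSplit T x ≤ M.lastSplit T (x + dir p)}
      ≤ M.η T x := by
  rw [M.eta_eq_add_sum_inflow_lastSplit T x]
  gcongr
  refine le_trans ?_ (M.card_arrivals_le_sum_inflow _ x)
  gcongr with p _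
  intro hp
  obtain ⟨hlt, hys⟩ := M.lastSplit_spec hp.1
  exact ⟨_, mem_Ico.mpr ⟨hp.2, hlt⟩, hys⟩

lemma sum_eta_zero_le (hn : 0 ≤ n) (A : Finset (Fin d → ℤ)) :
    ∑ x ∈ A, M.η 0 x ≤ n + max h 0 * #A := by
  calc ∑ x ∈ A, M.η 0 x ≤ ∑ x ∈ A, ((if x = 0 then n else 0) + max h 0) := by
        refine sum_le_sum fun x _ => ?_
        rcases eq_or_ne x 0 with rfl | hx
        · simp [M.init_origin]
        · simp [M.init_other x hx, hx]
    _ ≤ n + max h 0 * #A := by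
        rw [sum_add_distrib, sum_ite_eq', sum_const, nsmul_eq_mul, mul_comm]
        split_ifs <;> linarith

lemma half_card_le_sum_eta_zero (hd : 1 ≤ d) {T : ℕ} (hfin : (M.Tt T).Finite) :
    (#hfin.toFinset : ℝ) / 2 ≤ ∑ x ∈ hfin.toFinset, M.η 0 x := by
  set A := hfin.toFinset
  have hmemA : ∀ x, x ∈ A ↔ x ∈ M.Tt T := fun x => hfin.mem_toFinset
  set F := A ∪ A.biUnion fun z => univ.image (z + dir ·)
  have hAF : A ⊆ F := subset_union_left
  have hF : ∀ z ∈ A, ∀ p, z + dir p ∈ F := fun z hz p =>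
    mem_union_right _ (mem_biUnion.mpr ⟨z, hz, mem_image_of_mem _ (mem_univ p)⟩)
  have hSA : ∀ u < T, ∀ z ∈ M.S (u + 1), z ∈ A := fun u hu z hz =>
    (hmemA z).mpr (M.mem_Tt.mpr ⟨u, hu, hz⟩)
  set credit : (Fin d → ℤ) → ℕ :=
    fun x => #{p | x + dir p ∈ A ∧ M.lastSplit T x ≤ M.lastSplit T (x + dir p)}
  have hconserved := M.sum_eta_eq_sum_eta_zero hd (fun u hu z hz => hAF (hSA u hu z hz))
    fun u hu z hz => hF z (hSA u hu z hz)
  have hcount : (d * #A : ℝ) ≤ ∑ x ∈ F, (credit x : ℝ) := by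
    exact_mod_cast card_mul_le_sum_card_filter (M.lastSplit T) hAF hF
      fun x hx => M.lastSplit_of_notMem_Tt ((hmemA x).not.mp hx)
  have hlower : ∑ x ∈ F, (if x ∈ A then 0 else M.η 0 x)
      + 1 / (2 * d) * ∑ x ∈ F, (credit x : ℝ) ≤ ∑ x ∈ F, M.η T x := by
    rw [mul_sum, ← sum_add_distrib]
    exact sum_le_sum fun x _ => by simpa [credit, hmemA] using M.card_later_neighbors_le_eta T x
  have hout : ∑ x ∈ F, (if x ∈ A then 0 else M.η 0 x)
      = ∑ x ∈ F, M.η 0 x - ∑ x ∈ A, M.η 0 x := by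
    rw [sum_ite, sum_const_zero, zero_add, eq_sub_iff_add_eq, filter_not, filter_mem_eq_inter,
      inter_eq_right.mpr hAF, sum_sdiff hAF]
  have hd0 : (0 : ℝ) < d := by exact_mod_cast hd
  have hhalf : (#A : ℝ) / 2 = 1 / (2 * d) * (d * #A) := by field_simp
  have := mul_le_mul_of_nonneg_left hcount (by positivity : (0 : ℝ) ≤ 1 / (2 * d))
  linarith

lemma ncard_Tt_mul_le (hd : 1 ≤ d) (hh : h < 1 / 2) (hn : 0 ≤ n) (T : ℕ) :
    (M.Tt T).ncard * (1 / 2 - max h 0) ≤ n := by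
  have hfin := M.finite_Tt (by linarith) T
  rw [Set.ncard_eq_toFinset_card _ hfin]
  linarith [M.half_card_le_sum_eta_zero hd hfin, M.sum_eta_zero_le hn hfin.toFinset]

lemma Tt_mono : Monotone M.Tt := fun _ _ hTT' =>
  Set.biUnion_subset_biUnion_left (Set.Icc_subset_Icc_right hTT')

lemma T_subset_iUnion_Tt : M.T ⊆ ⋃ T, M.Tt T := by
  intro x hx
  obtain ⟨t, hxt⟩ := Set.mem_iUnion.mp hx
  cases t with
  | zero => simp [M.S_zero] at hxt
  | succ u => exact Set.mem_iUnion.mpr ⟨u + 1, M.mem_Tt.mpr ⟨u, u.lt_succ_self, hxt⟩⟩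

lemma exists_le_ncard_Tt (hh : h < 1) (hT : M.T.Infinite) (N : ℕ) :
    ∃ T, N ≤ (M.Tt T).ncard := by
  obtain ⟨s, hs, rfl⟩ := hT.exists_subset_card_eq N
  obtain ⟨T, hsT⟩ := M.Tt_mono.directed_le.exists_mem_subset_of_finset_subset_biUnion
    (hs.trans M.T_subset_iUnion_Tt)
  exact ⟨T, by simpa using Set.ncard_le_ncard hsT (M.finite_Tt hh T)⟩

lemma infinite_splits_add_dir (hd : 1 ≤ d) (hV : M.Valid) {x : Fin d → ℤ}
    (hx : {t | x ∈ M.S t}.Infinite) (p : Fin d × Bool) : {t | x + dir p ∈ M.S t}.Infinite := by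
  set y := x + dir p
  by_contra hfin
  obtain ⟨b, hb⟩ := (Set.not_infinite.mp hfin).bddAbove
  have hx' : {u | x ∈ M.S (u + 1)}.Infinite := hx.preimage fun t ht => by
    cases t with
    | zero => simp [M.S_zero] at ht
    | succ u => exact ⟨u, rfl⟩
  obtain ⟨k, hk⟩ := exists_nat_ge (2 * d * (1 - M.η b y))
  obtain ⟨T, hbT, hkT⟩ := hx'.exists_le_card_filter_Ico b k
  have hgain :
      (#{u ∈ Ico b T | x ∈ M.S (u + 1)} : ℝ) ≤ ∑ u ∈ Ico b T, M.inflow u y := by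
    rw [card_filter, Nat.cast_sum]
    refine sum_le_sum fun u _ => ?_
    split_ifs with hxu
    · calc ((1 : ℕ) : ℝ) ≤ (M.S (u + 1)).indicator (M.η u) (y + dir (p.1, !p.2)) := by
            simpa [y, add_dir_flip, Set.indicator_of_mem hxu] using M.S_subset u hxu
        _ ≤ M.inflow u y := M.indicator_le_inflow u y _
    · simpa using M.inflow_nonneg u y
  have hunstable : 1 ≤ M.η T y := by
    rw [M.eta_eq_add_sum_inflow hbT fun u hu hyu => by
      have := hb hyu; have := (mem_Ico.mp hu).1; omega]
    have hd0 : (0 : ℝ) < d := by exact_mod_cast hd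
    have : (k : ℝ) ≤ ∑ u ∈ Ico b T, M.inflow u y := (Nat.cast_le.mpr hkT).trans hgain
    calc (1 : ℝ) = M.η b y + 1 / (2 * d) * (2 * d * (1 - M.η b y)) := by field_simp; ring
      _ ≤ M.η b y + 1 / (2 * d) * ∑ u ∈ Ico b T, M.inflow u y := by gcongr; linarith
  obtain ⟨t₀, ht₀, hsplit⟩ := hV.2 T y hunstable
  have := hb hsplit
  omega

lemma T_infinite_of_infinite_splits (hd : 1 ≤ d) (hV : M.Valid) {x : Fin d → ℤ}
    (hx : {t | x ∈ M.S t}.Infinite) : M.T.Infinite := by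
  set e : Fin d → ℤ := dir (⟨0, hd⟩, true)
  have hsplits : ∀ k : ℕ, {t | x + k • e ∈ M.S t}.Infinite := by
    intro k
    induction k with
    | zero => simpa using hx
    | succ k ih =>
      have := M.infinite_splits_add_dir hd hV ih (⟨0, hd⟩, true)
      rwa [add_assoc, ← succ_nsmul] at this
  refine Set.infinite_of_injective_forall_mem (f := fun k : ℕ => x + k • e) (fun k m hkm => ?_)
    fun k => Set.mem_iUnion.mpr (hsplits k).nonempty
  simpa [e, dir] using congrFun hkm ⟨0, hd⟩

end SplittingModel

/-- If `h < 1/2` then the background `h` is robust for the splitting model on `ℤ^d`: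
for every initial mass `n ≥ 0` and every valid splitting order, the configuration
`η_n^h` stabilizes. -/
theorem robust_background {d : ℕ} (hd : 1 ≤ d) {h : ℝ} (hh : h < 1 / 2) :
    ∀ n : ℝ, 0 ≤ n → ∀ M : SplittingModel d n h, M.Valid → M.Stabilizes := by
  intro n hn M hV
  by_contra hstab
  obtain ⟨x, hx⟩ : ∃ x, {t | x ∈ M.S t}.Infinite := by
    simpa [SplittingModel.Stabilizes] using hstab
  have hgap : 0 < 1 / 2 - max h 0 := sub_pos.mpr (max_lt hh (by norm_num))
  obtain ⟨N, hN⟩ := exists_nat_gt (n / (1 / 2 - max h 0))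
  obtain ⟨T, hT⟩ := M.exists_le_ncard_Tt (by linarith) (M.T_infinite_of_infinite_splits hd hV hx) N
  have hbound := M.ncard_Tt_mul_le hd hh hn T
  have hmono := mul_le_mul_of_nonneg_right (Nat.cast_le (α := ℝ).mpr hT) hgap.le
  rw [div_lt_iff₀ hgap] at hN
  linarith
end

section
/- Consider the splitting model on Z^d (d ≥ 1) with any valid splitting order, h < 1, n ≥ 0, and suppose the model stabilizes. For k ≥ 1 let Q_k(x) = {y ∈ Z^d : max_i |x_i − y_i| ≤ k} and T^{(k)} = {x : Q_k(x) ⊆ T}. Then for every x ∉ T^{(k)}: u(x) < 2(1−h)·(2d)^{(2k+1)^d}. In particular the bound depends only on k, d and h, not on n. -/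
open scoped BigOperators

/-- The cube `Q_k(x) = {y ∈ ℤ^d : max_i |x i - y i| ≤ k}` centered at `x` with
radius `k`. -/
noncomputable def Qcube {d : ℕ} (k : ℕ) (x : Fin d → ℤ) : Finset (Fin d → ℤ) :=
  Finset.Icc (fun i => x i - k) (fun i => x i + k)

/-- The discrete Laplacian `Δf(x) = (1/(2d)) ∑_{y ∼ x} f y - f x`. -/
noncomputable def lap {d : ℕ} (f : (Fin d → ℤ) → ℝ) (x : Fin d → ℤ) : ℝ :=
  (1 / (2 * (d : ℝ))) * (∑ i : Fin d, (f (nbr x i 1) + f (nbr x i (-1)))) - f x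

/-!
Mass balance at a site `z` reads `η_∞(z) - η_0(z) = Δu(z)`, with `u` the emitted mass. As
`η_∞ < 1` and `η_0 ≥ h` (when `n ≥ 1`; for `n < 1` nothing ever splits), every neighbour `w` of `z`
has `u(w) < 2d(1 - h) + 2d u(z)`. A site `y ∈ Q_k(x)` outside `T` has `u(y) = 0`, and iterating
along a lattice path from `y` to `x`, of length at most `dk ≤ (2k+1)^d`, gives the bound.
-/

open Filter

lemma nbr_nbr_neg {d : ℕ} (z : Fin d → ℤ) (i : Fin d) (ε : ℤ) : nbr (nbr z i ε) i (-ε) = z := by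
  simp [nbr]

lemma exists_nbr_eq_of_sum_natAbs_sub_eq_succ {d m : ℕ} {z y : Fin d → ℤ}
    (hz : ∑ j, (z j - y j).natAbs = m + 1) :
    ∃ w i, ∃ ε : ℤ, (ε = 1 ∨ ε = -1) ∧ nbr w i ε = z ∧ ∑ j, (w j - y j).natAbs = m := by
  obtain ⟨i, hi⟩ : ∃ i, z i ≠ y i := by
    by_contra! hzy
    simp [hzy] at hz
  obtain ⟨ε, hε, hcloser⟩ : ∃ ε : ℤ, (ε = 1 ∨ ε = -1) ∧
      (z i + ε - y i).natAbs + 1 = (z i - y i).natAbs := by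
    rcases hi.lt_or_gt with hlt | hgt
    exacts [⟨1, by simp, by omega⟩, ⟨-1, by simp, by omega⟩]
  refine ⟨nbr z i ε, i, -ε, by omega, nbr_nbr_neg z i ε, ?_⟩
  have hrest : ∑ j ∈ Finset.univ.erase i, (nbr z i ε j - y j).natAbs =
      ∑ j ∈ Finset.univ.erase i, (z j - y j).natAbs :=
    Finset.sum_congr rfl fun j hj => by rw [nbr, Function.update_of_ne (Finset.ne_of_mem_erase hj)]
  rw [← Finset.add_sum_erase _ _ (Finset.mem_univ i)] at hz ⊢
  rw [hrest, nbr, Function.update_self]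
  omega

lemma sum_natAbs_sub_le_of_mem_Qcube {d k : ℕ} {x y : Fin d → ℤ} (hy : y ∈ Qcube k x) :
    ∑ i, (x i - y i).natAbs ≤ (2 * k + 1) ^ d := by
  obtain ⟨hlow, hhigh⟩ := Finset.mem_Icc.1 hy
  have hbernoulli : 1 + d * (2 * k) ≤ (1 + 2 * k) ^ d :=
    one_add_le_pow_of_two_add_nonneg (Nat.zero_le _) d
  calc ∑ i, (x i - y i).natAbs ≤ ∑ _i : Fin d, k := Finset.sum_le_sum fun i _ => by
        have h1 : x i - k ≤ y i := hlow i
        have h2 : y i ≤ x i + k := hhigh i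
        omega
    _ = d * k := by simp
    _ ≤ (2 * k + 1) ^ d := by rw [add_comm]; nlinarith

lemma lap_congr {d : ℕ} {f g : (Fin d → ℤ) → ℝ} {z : Fin d → ℤ} (hz : f z = g z)
    (hup : ∀ i, f (nbr z i 1) = g (nbr z i 1))
    (hdown : ∀ i, f (nbr z i (-1)) = g (nbr z i (-1))) : lap f z = lap g z := by
  simp only [lap, hz, hup, hdown]

lemma lap_sum {d : ℕ} {ι : Type*} (s : Finset ι) (f : ι → (Fin d → ℤ) → ℝ) (z : Fin d → ℤ) :
    lap (fun w => ∑ t ∈ s, f t w) z = ∑ t ∈ s, lap (f t) z := by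
  simp only [lap, Finset.sum_sub_distrib, Finset.mul_sum, ← Finset.sum_add_distrib]
  rw [Finset.sum_comm]

namespace SplittingModel

variable {d : ℕ} {n h : ℝ} (M : SplittingModel d n h)

noncomputable def emitAt (t : ℕ) : (Fin d → ℤ) → ℝ :=
  (M.S (t + 1)).indicator (M.η t)

lemma emitAt_nonneg (t : ℕ) (z : Fin d → ℤ) : 0 ≤ M.emitAt t z :=
  Set.indicator_nonneg (fun _ hz => zero_le_one.trans (M.S_subset t hz)) z

lemma emit_nonneg (z : Fin d → ℤ) : 0 ≤ M.emit z :=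
  tsum_nonneg (fun t => M.emitAt_nonneg t z)

lemma emit_eq_zero_of_forall_notMem {z : Fin d → ℤ} (hz : ∀ t, z ∉ M.S (t + 1)) :
    M.emit z = 0 := by
  simp [emit, Set.indicator_of_notMem, hz]

lemma emit_eq_zero_of_notMem_T {z : Fin d → ℤ} (hz : z ∉ M.T) : M.emit z = 0 :=
  M.emit_eq_zero_of_forall_notMem fun t hzt => hz (Set.mem_iUnion.2 ⟨t + 1, hzt⟩)

lemma eta_succ_s17 (t : ℕ) (z : Fin d → ℤ) :
    M.η (t + 1) z = M.η t z + lap (M.emitAt t) z := by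
  rw [M.evolve, lap, emitAt]
  by_cases hz : z ∈ M.S (t + 1)
  · rw [Set.indicator_of_notMem (Set.notMem_compl_iff.2 hz), Set.indicator_of_mem hz]
    ring
  · rw [Set.indicator_of_mem (Set.mem_compl hz), Set.indicator_of_notMem hz]
    ring

lemma eta_eq_add_sum_lap (T : ℕ) (z : Fin d → ℤ) :
    M.η T z = M.η 0 z + ∑ t ∈ Finset.range T, lap (M.emitAt t) z := by
  induction T with
  | zero => simp
  | succ T ih => rw [Finset.sum_range_succ, M.eta_succ_s17, ih, add_assoc]

lemma eventually_notMem_S (hstab : M.Stabilizes) (z : Fin d → ℤ) :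
    ∀ᶠ t in atTop, z ∉ M.S t := by
  rw [← Nat.cofinite_eq_atTop]
  exact (hstab z).eventually_cofinite_notMem

lemma eventually_eta_lt_one (hM : M.Valid) (hstab : M.Stabilizes) (z : Fin d → ℤ) :
    ∀ᶠ t in atTop, M.η t z < 1 := by
  obtain ⟨N, hN⟩ := eventually_atTop.1 (M.eventually_notMem_S hstab z)
  refine eventually_atTop.2 ⟨N, fun t ht => lt_of_not_ge fun hz => ?_⟩
  obtain ⟨t₀, -, hsplit⟩ := hM.2 t z hz
  exact hN (t + t₀) (by omega) hsplit

lemma eventually_emit_eq_sum (hstab : M.Stabilizes) (z : Fin d → ℤ) :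
    ∀ᶠ T in atTop, M.emit z = ∑ t ∈ Finset.range T, M.emitAt t z := by
  obtain ⟨N, hN⟩ := eventually_atTop.1 (M.eventually_notMem_S hstab z)
  refine eventually_atTop.2 ⟨N, fun T hT => tsum_eq_sum fun t ht => ?_⟩
  exact Set.indicator_of_notMem (hN (t + 1) (by simp at ht; omega)) _

lemma eventually_eta_eq_add_lap_emit (hstab : M.Stabilizes) (z : Fin d → ℤ) :
    ∀ᶠ T in atTop, M.η T z = M.η 0 z + lap M.emit z := by
  filter_upwards [M.eventually_emit_eq_sum hstab z,
    eventually_all.2 fun i => M.eventually_emit_eq_sum hstab (nbr z i 1),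
    eventually_all.2 fun i => M.eventually_emit_eq_sum hstab (nbr z i (-1))]
    with T hz hup hdown
  rw [M.eta_eq_add_sum_lap, ← lap_sum]
  exact congrArg _ (lap_congr hz.symm (fun i => (hup i).symm) fun i => (hdown i).symm)

lemma lap_emit_lt (hM : M.Valid) (hstab : M.Stabilizes) {z : Fin d → ℤ}
    (hz : h ≤ M.η 0 z) : lap M.emit z < 1 - h := by
  obtain ⟨T, hlt, heq⟩ :=
    ((M.eventually_eta_lt_one hM hstab z).and (M.eventually_eta_eq_add_lap_emit hstab z)).exists
  linarith

lemma emit_nbr_lt (hM : M.Valid) (hstab : M.Stabilizes) {z : Fin d → ℤ}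
    (hz : h ≤ M.η 0 z) (i : Fin d) {ε : ℤ} (hε : ε = 1 ∨ ε = -1) :
    M.emit (nbr z i ε) < 2 * d * (1 - h) + 2 * d * M.emit z := by
  have hd : (0 : ℝ) < 2 * d := by have := i.pos; positivity
  have hnbr : M.emit (nbr z i ε) ≤ ∑ j, (M.emit (nbr z j 1) + M.emit (nbr z j (-1))) := by
    refine le_trans ?_ (Finset.single_le_sum (fun j _ => add_nonneg (M.emit_nonneg _)
      (M.emit_nonneg _)) (Finset.mem_univ i))
    rcases hε with rfl | rfl
    · exact le_add_of_nonneg_right (M.emit_nonneg _)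
    · exact le_add_of_nonneg_left (M.emit_nonneg _)
  have hlap := M.lap_emit_lt hM hstab hz
  rw [lap, one_div, sub_lt_iff_lt_add, inv_mul_lt_iff₀ hd] at hlap
  linarith

-- With `c = 2(1 - h)`, the invariant `u + c ≤ c (2d)^m` survives the step `u(z) < d c + 2d u(w)`
-- because `d c ≥ c`.
lemma emit_add_le_pow (hh : h < 1) (hM : M.Valid) (hstab : M.Stabilizes)
    (h0 : ∀ z, h ≤ M.η 0 z) {y : Fin d → ℤ} (hy : M.emit y = 0) (z : Fin d → ℤ) :
    M.emit z + 2 * (1 - h) ≤ 2 * (1 - h) * (2 * d) ^ ∑ j, (z j - y j).natAbs := by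
  generalize hm : ∑ j, (z j - y j).natAbs = m
  induction m generalizing z with
  | zero =>
    obtain rfl : z = y := funext fun j => by
      have := (Finset.sum_eq_zero_iff.1 hm) j (Finset.mem_univ j)
      omega
    simp [hy]
  | succ m ih =>
    obtain ⟨w, i, ε, hε, rfl, hw⟩ := exists_nbr_eq_of_sum_natAbs_sub_eq_succ hm
    have hstep := M.emit_nbr_lt hM hstab (h0 w) i hε
    have hd : (1 : ℝ) ≤ d := by exact_mod_cast i.pos
    have hw_le := mul_le_mul_of_nonneg_left (ih w hw) (by positivity : (0 : ℝ) ≤ 2 * d)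
    rw [pow_succ]
    nlinarith

lemma eta_lt_one_of_lt_one (hh : h < 1) (hn : n < 1) (t : ℕ) (z : Fin d → ℤ) :
    M.η t z < 1 := by
  induction t generalizing z with
  | zero =>
    by_cases hz : z = 0
    · rwa [hz, M.init_origin]
    · rwa [M.init_other z hz]
  | succ t ih =>
    have hquiet : M.emitAt t = 0 :=
      funext fun w => Set.indicator_of_notMem (fun hw => (ih w).not_ge (M.S_subset t hw)) _
    simpa [M.eta_succ_s17, hquiet, lap] using ih z

lemma emit_eq_zero_of_lt_one (hh : h < 1) (hn : n < 1) (z : Fin d → ℤ) : M.emit z = 0 :=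
  M.emit_eq_zero_of_forall_notMem fun t hz =>
    (M.eta_lt_one_of_lt_one hh hn t z).not_ge (M.S_subset t hz)

lemma le_eta_zero (hn : h ≤ n) (z : Fin d → ℤ) : h ≤ M.η 0 z := by
  by_cases hz : z = 0
  · rwa [hz, M.init_origin]
  · rw [M.init_other z hz]

end SplittingModel

theorem emit_bound_outside_general {d : ℕ} (hd : 1 ≤ d) {n h : ℝ}
    (hh : h < 1)
    (M : SplittingModel d n h) (hM : M.Valid) (hstab : M.Stabilizes)
    (k : ℕ) (x : Fin d → ℤ) (hx : ¬ ∀ y ∈ Qcube k x, y ∈ M.T) :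
    M.emit x < 2 * (1 - h) * (2 * (d : ℝ)) ^ ((2 * k + 1) ^ d) := by
  have hc : 0 < 2 * (1 - h) := by linarith
  have h2d : (1 : ℝ) ≤ 2 * d := by
    have : (1 : ℝ) ≤ d := by exact_mod_cast hd
    linarith
  rcases lt_or_ge n 1 with hn | hn
  · rw [M.emit_eq_zero_of_lt_one hh hn x]
    positivity
  obtain ⟨y, hyQ, hyT⟩ : ∃ y ∈ Qcube k x, y ∉ M.T := by simpa using hx
  calc M.emit x < M.emit x + 2 * (1 - h) := by linarith
    _ ≤ 2 * (1 - h) * (2 * d) ^ ∑ j, (x j - y j).natAbs :=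
      M.emit_add_le_pow hh hM hstab (M.le_eta_zero (by linarith))
        (M.emit_eq_zero_of_notMem_T hyT) x
    _ ≤ 2 * (1 - h) * (2 * d) ^ ((2 * k + 1) ^ d) := by
      gcongr
      exact sum_natAbs_sub_le_of_mem_Qcube hyQ

/-- For the splitting model on `ℤ^d` with any valid splitting order, `h < 1`,
`n ≥ 0`, assuming the model stabilizes: for `k ≥ 1` and every `x` with
`Q_k(x) ⊄ T`, the emitted mass satisfies `u x < 2(1-h)(2d)^((2k+1)^d)`;
in particular the bound does not depend on `n`. -/
theorem emit_bound_outside {d : ℕ} (hd : 1 ≤ d) {n h : ℝ}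
    (hh : h < 1) (hn : 0 ≤ n)
    (M : SplittingModel d n h) (hM : M.Valid) (hstab : M.Stabilizes)
    (k : ℕ) (hk : 1 ≤ k) (x : Fin d → ℤ) (hx : ¬ ∀ y ∈ Qcube k x, y ∈ M.T) :
    M.emit x < 2 * (1 - h) * (2 * (d : ℝ)) ^ ((2 * k + 1) ^ d) :=
  emit_bound_outside_general hd hh M hM hstab k x hx
end
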